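/- For 0 ≤ μ ≤ 1, the two-qubit pure state |ψ⟩ = √((1−μ)/2)(|01⟩+|10⟩) + √(μ/2)(|01⟩−|10⟩) satisfies Tr(P_s ψ) = 1−μ, Tr(P_as ψ) = μ, and D(ψ_A, ψ_B) = 2√(μ(1−μ)), so the bound D(ψ_A,ψ_B) ≤ 2√(Tr(P_as ψ)Tr(P_s ψ)) is attained with equality. -/

import Mathlib

open scoped Matrix Kronecker ComplexOrder

noncomputable section

namespace QEMD

variable {m n : Type*} [Fintype m] [Fintype n] [DecidableEq m] [DecidableEq n]

/-- Total square root: the PSD square root if `A` is PSD, else `0`. -/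
def msqrt (A : Matrix n n ℂ) : Matrix n n ℂ :=
  letI := Classical.dec A.PosSemidef
  if h : A.PosSemidef then
    h.1.eigenvectorUnitary.1 * Matrix.diagonal ((↑) ∘ (Real.sqrt ∘ h.1.eigenvalues)) *
      (star h.1.eigenvectorUnitary : Matrix n n ℂ)
  else 0

/-- Trace norm `‖A‖₁ = Tr √(AᴴA)`. -/
def traceNorm (A : Matrix n n ℂ) : ℝ :=
  ((msqrt (Aᴴ * A)).trace).re

/-- Trace distance `D(ρ,σ) = ½‖ρ-σ‖₁`. -/
def traceDist (ρ σ : Matrix n n ℂ) : ℝ := traceNorm (ρ - σ) / 2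

/-- Fidelity `F(ρ,σ) = Tr √(√ρ σ √ρ)`. -/
def fidelity (ρ σ : Matrix n n ℂ) : ℝ :=
  ((msqrt (msqrt ρ * σ * msqrt ρ)).trace).re

/-- Density matrix predicate. -/
def IsDensity (ρ : Matrix n n ℂ) : Prop := ρ.PosSemidef ∧ ρ.trace = 1

/-- Projector `|v⟩⟨v|` onto a vector. -/
def proj (v : n → ℂ) : Matrix n n ℂ := Matrix.of fun i j => v i * star (v j)

/-- Partial trace over the first (left) factor. -/
def traceLeft (ρ : Matrix (m × n) (m × n) ℂ) : Matrix n n ℂ :=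
  Matrix.of fun i j => ∑ k, ρ (k, i) (k, j)

/-- Partial trace over the second (right) factor. -/
def traceRight (ρ : Matrix (m × n) (m × n) ℂ) : Matrix m m ℂ :=
  Matrix.of fun i j => ∑ k, ρ (i, k) (j, k)

/-- The swap operator `S|αβ⟩ = |βα⟩` on `ℂ^d ⊗ ℂ^d`. -/
def swap (d : ℕ) : Matrix (Fin d × Fin d) (Fin d × Fin d) ℂ :=
  Matrix.of fun p q => if p.1 = q.2 ∧ p.2 = q.1 then 1 else 0

/-- Projection onto the symmetric subspace, `P_s = (I + S)/2`. -/
def Psym (d : ℕ) : Matrix (Fin d × Fin d) (Fin d × Fin d) ℂ := (2:ℂ)⁻¹ • (1 + swap d)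

/-- Projection onto the antisymmetric subspace, `P_as = (I - S)/2`. -/
def Pasym (d : ℕ) : Matrix (Fin d × Fin d) (Fin d × Fin d) ℂ := (2:ℂ)⁻¹ • (1 - swap d)

/-- `ρAB` is a quantum coupling of `ρA` and `ρB`. -/
def IsCoupling (ρAB : Matrix (m × n) (m × n) ℂ) (ρA : Matrix m m ℂ)
    (ρB : Matrix n n ℂ) : Prop :=
  IsDensity ρAB ∧ traceRight ρAB = ρA ∧ traceLeft ρAB = ρB

/-- The maximally entangled vector `|Φ⟩ = (1/√d) ∑ᵢ |i⟩|i⟩`. -/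
def maxEnt (d : ℕ) : Fin d × Fin d → ℂ :=
  fun p => if p.1 = p.2 then ((1 / Real.sqrt d : ℝ) : ℂ) else 0

/-!
The state is `x|01⟩ + y|10⟩` with real `x, y = a ± b`, `a = √((1-μ)/2)`, `b = √(μ/2)`. Its
marginals are the diagonal matrices `diag(x², y²)` and `diag(y², x²)`, so their trace distance is
`|x² - y²| = 4ab = 2√(μ(1-μ))`, while the weights on the symmetric and antisymmetric subspaces are
`(x+y)²/2 = 2a² = 1-μ` and `(x-y)²/2 = 2b² = μ`.
-/

open scoped MatrixOrder in
theorem msqrt_eq_sqrt {A : Matrix n n ℂ} (hA : A.PosSemidef) : msqrt A = CFC.sqrt A := by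
  rw [msqrt, dif_pos hA, CFC.sqrt_eq_cfc, cfc_nnreal_eq_real _ A, hA.1.cfc_eq]
  simp only [Matrix.IsHermitian.cfc, Unitary.conjStarAlgAut_apply]
  congr 3
  ext i
  simp [hA.eigenvalues_nonneg i]

open scoped MatrixOrder in
theorem msqrt_mul_self {B : Matrix n n ℂ} (hB : B.PosSemidef) : msqrt (B * B) = B := by
  have hBB : (B * B).PosSemidef := by
    simpa only [hB.1.eq] using Matrix.posSemidef_conjTranspose_mul_self B
  rw [msqrt_eq_sqrt hBB, CFC.sqrt_mul_self B hB.nonneg]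

theorem traceNorm_diagonal (d : n → ℂ) : traceNorm (Matrix.diagonal d) = ∑ i, ‖d i‖ := by
  have hsq : (Matrix.diagonal d)ᴴ * Matrix.diagonal d =
      Matrix.diagonal (fun i => (‖d i‖ : ℂ)) * Matrix.diagonal (fun i => (‖d i‖ : ℂ)) := by
    simp [Matrix.diagonal_conjTranspose, Matrix.diagonal_mul_diagonal, Complex.conj_mul', sq]
  have hpsd : (Matrix.diagonal fun i => (‖d i‖ : ℂ)).PosSemidef :=
    Matrix.posSemidef_diagonal_iff.mpr fun i => by simp
  rw [traceNorm, hsq, msqrt_mul_self hpsd, Matrix.trace_diagonal]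
  simp

/-- The two-qubit vector `x|01⟩ + y|10⟩`. -/
def singleExcitation (x y : ℂ) : Fin 2 × Fin 2 → ℂ :=
  fun p => if p = (0, 1) then x else if p = (1, 0) then y else 0

theorem trace_Psym_mul_proj_singleExcitation (x y : ℂ) :
    (Psym 2 * proj (singleExcitation x y)).trace = ((Complex.normSq (x + y) / 2 : ℝ) : ℂ) := by
  simp only [Matrix.trace, Matrix.diag, Matrix.mul_apply, Fintype.sum_prod_type,
    Fin.sum_univ_two, Psym, swap, proj, singleExcitation, Matrix.of_apply, Matrix.smul_apply,
    Matrix.add_apply, Matrix.one_apply, Prod.mk.injEq]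
  norm_num
  rw [← Complex.mul_conj, map_add]
  ring

theorem trace_Pasym_mul_proj_singleExcitation (x y : ℂ) :
    (Pasym 2 * proj (singleExcitation x y)).trace = ((Complex.normSq (x - y) / 2 : ℝ) : ℂ) := by
  simp only [Matrix.trace, Matrix.diag, Matrix.mul_apply, Fintype.sum_prod_type,
    Fin.sum_univ_two, Pasym, swap, proj, singleExcitation, Matrix.of_apply, Matrix.smul_apply,
    Matrix.sub_apply, Matrix.one_apply, Prod.mk.injEq]
  norm_num
  rw [← Complex.mul_conj, map_sub]
  ring

theorem traceRight_proj_singleExcitation (x y : ℂ) :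
    traceRight (proj (singleExcitation x y)) =
      Matrix.diagonal ![(Complex.normSq x : ℂ), Complex.normSq y] := by
  ext i j
  fin_cases i <;> fin_cases j <;>
    simp [traceRight, proj, singleExcitation, Fin.sum_univ_two, Complex.mul_conj]

theorem traceLeft_proj_singleExcitation (x y : ℂ) :
    traceLeft (proj (singleExcitation x y)) =
      Matrix.diagonal ![(Complex.normSq y : ℂ), Complex.normSq x] := by
  ext i j
  fin_cases i <;> fin_cases j <;>
    simp [traceLeft, proj, singleExcitation, Fin.sum_univ_two, Complex.mul_conj]

theorem traceDist_marginals_singleExcitation (x y : ℂ) :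
    traceDist (traceRight (proj (singleExcitation x y))) (traceLeft (proj (singleExcitation x y)))
      = |Complex.normSq x - Complex.normSq y| := by
  rw [traceDist, traceRight_proj_singleExcitation, traceLeft_proj_singleExcitation,
    Matrix.diagonal_sub, traceNorm_diagonal, Fin.sum_univ_two]
  simp only [Matrix.cons_val_zero, Matrix.cons_val_one, Matrix.cons_val_fin_one]
  rw [← Complex.ofReal_sub, ← Complex.ofReal_sub, Complex.norm_real, Complex.norm_real,
    Real.norm_eq_abs, Real.norm_eq_abs, abs_sub_comm (Complex.normSq y)]
  ring

theorem stmt6 (μ : ℝ) (hμ0 : 0 ≤ μ) (hμ1 : μ ≤ 1)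
    (ψ : Fin 2 × Fin 2 → ℂ)
    (hψ : ψ = fun p =>
      if p = (0, 1) then ((Real.sqrt ((1 - μ) / 2) + Real.sqrt (μ / 2) : ℝ) : ℂ)
      else if p = (1, 0) then ((Real.sqrt ((1 - μ) / 2) - Real.sqrt (μ / 2) : ℝ) : ℂ)
      else 0) :
    (Psym 2 * proj ψ).trace = ((1 - μ : ℝ) : ℂ) ∧
    (Pasym 2 * proj ψ).trace = ((μ : ℝ) : ℂ) ∧
    traceDist (traceRight (proj ψ)) (traceLeft (proj ψ))
      = 2 * Real.sqrt (μ * (1 - μ)) := by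
  set a := Real.sqrt ((1 - μ) / 2)
  set b := Real.sqrt (μ / 2)
  have ha : a ^ 2 = (1 - μ) / 2 := Real.sq_sqrt (by linarith)
  have hb : b ^ 2 = μ / 2 := Real.sq_sqrt (by linarith)
  have hab : 2 * Real.sqrt (μ * (1 - μ)) = 4 * (a * b) := by
    rw [show μ * (1 - μ) = (2 * (a * b)) ^ 2 by
      linear_combination (-(4 * b ^ 2)) * ha - (2 * (1 - μ)) * hb]
    rw [Real.sqrt_sq (by positivity)]
    ring
  have hψ' : ψ = singleExcitation ((a + b : ℝ) : ℂ) ((a - b : ℝ) : ℂ) := hψ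
  rw [hψ', trace_Psym_mul_proj_singleExcitation, trace_Pasym_mul_proj_singleExcitation,
    traceDist_marginals_singleExcitation, ← Complex.ofReal_add, ← Complex.ofReal_sub]
  simp only [Complex.normSq_ofReal, hab]
  refine ⟨?_, ?_, ?_⟩
  · congr 1; linear_combination 2 * ha
  · congr 1; linear_combination 2 * hb
  · rw [show (a + b) * (a + b) - (a - b) * (a - b) = 4 * (a * b) by ring]
    exact abs_of_nonneg (by positivity)
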